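/- arXiv:1901.02468 — 8 statements merged into one kernel-verified Lean document; each statement's English description precedes it below -/
import Mathlib

section
/- A tree T has a perfect matching if and only if for every vertex v of T, the forest obtained by deleting v and its incident edges has exactly one connected component with an odd number of vertices. -/
/-!
If `v` is matched to `w`, every component of `T - v` not containing `w` is closed under the
matching and hence even, while the component of `w` becomes closed once `v` is added, so it is odd.

Conversely, the condition at any vertex forces `|V|` to be even. For an edge `ab` of a tree, the
component of `T - b` containing `a` and the component of `T - a` containing `b` partition `V`, so
one is odd iff the other is. Matching every vertex `v` with its neighbour in the unique odd
component of `T - v` is therefore symmetric, and it is a perfect matching because distinct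
neighbours of `v` lie in distinct components of `T - v`.
-/

namespace SimpleGraph

variable {V : Type*} {G : SimpleGraph V} {a b v x y : V}

lemma mem_image_supp_of_adj {s : Set V} {c : (G.induce s).ConnectedComponent}
    (hy : y ∈ Subtype.val '' c.supp) (hxy : G.Adj x y) (hx : x ∈ s) :
    x ∈ Subtype.val '' c.supp := by
  obtain ⟨y, hyc, rfl⟩ := hy
  exact ⟨⟨x, hx⟩, (ConnectedComponent.connectedComponentMk_eq_of_adj
    (G := G.induce s) (v := ⟨x, hx⟩) (w := y) hxy).trans hyc, rfl⟩

lemma Reachable.exists_adj_reachable_induce_ne (h : G.Reachable x v) (hx : x ≠ v) :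
    ∃ b, ∃ hb : G.Adj v b, (G.induce {u | u ≠ v}).Reachable ⟨x, hx⟩ ⟨b, hb.ne'⟩ := by
  obtain ⟨p⟩ := h
  induction p with
  | nil => exact absurd rfl hx
  | @cons x y v hxy p ih =>
    by_cases hy : y = v
    · subst hy
      exact ⟨x, hxy.symm, .refl _⟩
    · obtain ⟨b, hb, hyb⟩ := ih hy
      exact ⟨b, hb, .trans (Adj.reachable (G := G.induce _) (v := ⟨y, hy⟩) hxy) hyb⟩

lemma Connected.exists_adj_connectedComponentMk_eq (hG : G.Connected)
    (c : (G.induce {u | u ≠ v}).ConnectedComponent) :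
    ∃ b, ∃ hb : G.Adj v b, (G.induce {u | u ≠ v}).connectedComponentMk ⟨b, hb.ne'⟩ = c := by
  induction c using ConnectedComponent.ind with
  | h x =>
    obtain ⟨b, hb, hxb⟩ := (hG.preconnected x v).exists_adj_reachable_induce_ne x.2
    exact ⟨b, hb, ConnectedComponent.sound hxb.symm⟩

lemma Reachable.deleteEdges_of_induce_ne {e : Sym2 V} (hv : v ∈ e)
    {x y : {u | u ≠ v}} (h : (G.induce {u | u ≠ v}).Reachable x y) :
    (G.deleteEdges {e}).Reachable x y := by
  refine h.map (G' := G.deleteEdges {e}) ⟨Subtype.val, fun {x y} hxy => ⟨hxy, ?_⟩⟩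
  rintro ⟨rfl, -⟩
  rcases Sym2.mem_iff.mp hv with h | h
  exacts [x.2 h.symm, y.2 h.symm]

lemma IsAcyclic.disjoint_image_supp (hG : G.IsAcyclic) (hab : G.Adj a b) :
    Disjoint
      (Subtype.val '' ((G.induce {u | u ≠ b}).connectedComponentMk ⟨a, hab.ne⟩).supp)
      (Subtype.val '' ((G.induce {u | u ≠ a}).connectedComponentMk ⟨b, hab.ne'⟩).supp) := by
  refine Set.disjoint_left.mpr ?_
  rintro _ ⟨x, hxa, rfl⟩ ⟨y, hyb, hxy⟩
  have hxa := (ConnectedComponent.exact hxa).deleteEdges_of_induce_ne (Sym2.mem_mk_right a b)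
  have hyb := (ConnectedComponent.exact hyb).deleteEdges_of_induce_ne (Sym2.mem_mk_left a b)
  rw [hxy] at hyb
  exact isAcyclic_iff_forall_adj_isBridge.mp hG hab (hxa.symm.trans hyb)

lemma Walk.mem_image_supp_or (p : G.Walk x a) (hab : G.Adj a b) :
    x ∈ Subtype.val '' ((G.induce {u | u ≠ b}).connectedComponentMk ⟨a, hab.ne⟩).supp ∨
      x ∈ Subtype.val '' ((G.induce {u | u ≠ a}).connectedComponentMk ⟨b, hab.ne'⟩).supp := by
  induction p with
  | nil => exact .inl ⟨⟨_, hab.ne⟩, rfl, rfl⟩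
  | @cons x y a hxy p ih =>
    rcases ih hab with hy | hy
    · by_cases hxb : x = b
      · subst hxb
        exact .inr ⟨_, rfl, rfl⟩
      · exact .inl (mem_image_supp_of_adj hy hxy hxb)
    · by_cases hxa : x = a
      · subst hxa
        exact .inl ⟨_, rfl, rfl⟩
      · exact .inr (mem_image_supp_of_adj hy hxy hxa)

lemma Preconnected.image_supp_union_image_supp (hG : G.Preconnected) (hab : G.Adj a b) :
    Subtype.val '' ((G.induce {u | u ≠ b}).connectedComponentMk ⟨a, hab.ne⟩).supp ∪
      Subtype.val '' ((G.induce {u | u ≠ a}).connectedComponentMk ⟨b, hab.ne'⟩).supp =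
        Set.univ :=
  Set.eq_univ_of_forall fun x => (hG x a).elim fun p => p.mem_image_supp_or hab

lemma IsTree.card_supp_add_card_supp [Finite V] (hG : G.IsTree) (hab : G.Adj a b) :
    Nat.card ((G.induce {u | u ≠ b}).connectedComponentMk ⟨a, hab.ne⟩).supp +
      Nat.card ((G.induce {u | u ≠ a}).connectedComponentMk ⟨b, hab.ne'⟩).supp = Nat.card V := by
  simp only [← Nat.card_image_of_injective Subtype.val_injective, Nat.card_coe_set_eq]
  rw [← Set.ncard_union_eq (hG.isAcyclic.disjoint_image_supp hab),
    hG.connected.preconnected.image_supp_union_image_supp hab, Set.ncard_univ]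

lemma IsTree.odd_card_supp_of_odd_card_supp [Finite V] (hG : G.IsTree) (hV : Even (Nat.card V))
    (hab : G.Adj a b)
    (h : Odd (Nat.card ((G.induce {u | u ≠ a}).connectedComponentMk ⟨b, hab.ne'⟩).supp)) :
    Odd (Nat.card ((G.induce {u | u ≠ b}).connectedComponentMk ⟨a, hab.ne⟩).supp) := by
  rw [← hG.card_supp_add_card_supp hab, Nat.even_add] at hV
  rw [← Nat.not_even_iff_odd] at h ⊢
  exact fun h' => h (hV.mp h')

lemma IsAcyclic.eq_of_adj_of_connectedComponentMk_eq {b' : V} (hG : G.IsAcyclic)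
    (hab : G.Adj a b) (hab' : G.Adj a b')
    (h : (G.induce {u | u ≠ a}).connectedComponentMk ⟨b, hab.ne'⟩ =
      (G.induce {u | u ≠ a}).connectedComponentMk ⟨b', hab'.ne'⟩) : b = b' := by
  by_contra hbb'
  exact Set.disjoint_left.mp (hG.disjoint_image_supp hab)
    (mem_image_supp_of_adj ⟨_, rfl, rfl⟩ hab'.symm (Ne.symm hbb')) ⟨_, h.symm, rfl⟩

lemma Subgraph.IsPerfectMatching.even_ncard_of_adj_mem [Finite V] {M : G.Subgraph}
    (hM : M.IsPerfectMatching) {S : Set V} (hS : ∀ ⦃x y⦄, x ∈ S → M.Adj x y → y ∈ S) :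
    Even S.ncard := by
  have hMS : (M.induce S).IsMatching := fun x hx => by
    obtain ⟨y, hxy, hy⟩ := hM.1 (hM.2 x)
    exact ⟨y, ⟨hx, hS hx hxy, hxy⟩, fun z hz => hy z hz.2.2⟩
  have : Fintype (M.induce S).verts := Fintype.ofFinite S
  change Even (M.induce S).verts.ncard
  rw [Set.ncard_eq_toFinset_card']
  exact hMS.even_card

theorem Subgraph.IsPerfectMatching.existsUnique_odd_card_supp [Finite V] {M : G.Subgraph}
    (hM : M.IsPerfectMatching) (v : V) :
    ∃! c : (G.induce {u | u ≠ v}).ConnectedComponent, Odd (Nat.card c.supp) := by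
  obtain ⟨w, hvw, hw⟩ := hM.1 (hM.2 v)
  have hwv : w ≠ v := (M.adj_sub hvw).ne'
  set c₀ := (G.induce {u | u ≠ v}).connectedComponentMk ⟨w, hwv⟩
  have hclosed (c : (G.induce {u | u ≠ v}).ConnectedComponent) ⦃x y : V⦄
      (hx : x ∈ Subtype.val '' c.supp) (hxy : M.Adj x y) (hy : y ≠ v) :
      y ∈ Subtype.val '' c.supp :=
    mem_image_supp_of_adj hx (M.adj_sub hxy).symm hy
  have hcard (c : (G.induce {u | u ≠ v}).ConnectedComponent) :
      Nat.card c.supp = (Subtype.val '' c.supp).ncard := by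
    rw [← Nat.card_coe_set_eq, Nat.card_image_of_injective Subtype.val_injective]
  have heven (c) (hc : c ≠ c₀) : Even (Nat.card c.supp) := by
    rw [hcard]
    refine hM.even_ncard_of_adj_mem fun x y hx hxy => hclosed c hx hxy ?_
    rintro rfl
    obtain rfl := hw x hxy.symm
    obtain ⟨_, hwc, rfl⟩ := hx
    exact hc hwc.symm
  have hodd : Odd (Nat.card c₀.supp) := by
    have hv : v ∉ Subtype.val '' c₀.supp := fun ⟨x, _, hxv⟩ => x.2 hxv
    have := hM.even_ncard_of_adj_mem (S := insert v (Subtype.val '' c₀.supp)) ?_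
    · rw [Set.ncard_insert_of_notMem hv, Nat.even_add_one, ← hcard] at this
      exact Nat.not_even_iff_odd.mp this
    rintro x y (rfl | hx) hxy
    · exact .inr ⟨⟨w, hwv⟩, rfl, (hw y hxy).symm⟩
    · by_cases hy : y = v
      · exact .inl hy
      · exact .inr (hclosed c₀ hx hxy hy)
  exact ⟨c₀, hodd, fun c hc => by_contra fun h => Nat.not_even_iff_odd.mpr hc (heven c h)⟩

lemma even_card_of_existsUnique_odd_card_supp [Finite V] (v : V)
    (h : ∃! c : (G.induce {u | u ≠ v}).ConnectedComponent, Odd (Nat.card c.supp)) :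
    Even (Nat.card V) := by
  obtain ⟨c₀, hc₀, hc⟩ := h
  have hodd : (G.induce {u | u ≠ v}).oddComponents = {c₀} := by
    ext c
    simp only [oddComponents, Set.mem_ofPred_eq, Set.mem_singleton_iff, ← Nat.card_coe_set_eq]
    exact ⟨hc c, fun h => h ▸ hc₀⟩
  have := (odd_ncard_oddComponents (G := G.induce {u | u ≠ v})).mp (by simp [hodd])
  rw [Nat.card_coe_set_eq] at this
  rw [← Set.ncard_compl_add_ncard {v}, Set.ncard_singleton, Nat.even_add_one,
    Nat.not_even_iff_odd]
  exact this

/- Asking for both parities makes the relation symmetric by construction; in a tree with an even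
number of vertices either one implies the other. -/
def oddSidesSubgraph (G : SimpleGraph V) : G.Subgraph where
  verts := Set.univ
  Adj x y := ∃ h : G.Adj x y,
    Odd (Nat.card ((G.induce {u | u ≠ x}).connectedComponentMk ⟨y, h.ne'⟩).supp) ∧
      Odd (Nat.card ((G.induce {u | u ≠ y}).connectedComponentMk ⟨x, h.ne⟩).supp)
  adj_sub := fun ⟨h, _⟩ => h
  edge_vert _ := trivial
  symm := ⟨fun _ _ ⟨h, hx, hy⟩ => ⟨h.symm, hy, hx⟩⟩

@[simp]
lemma oddSidesSubgraph_adj : G.oddSidesSubgraph.Adj x y ↔ ∃ h : G.Adj x y,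
    Odd (Nat.card ((G.induce {u | u ≠ x}).connectedComponentMk ⟨y, h.ne'⟩).supp) ∧
      Odd (Nat.card ((G.induce {u | u ≠ y}).connectedComponentMk ⟨x, h.ne⟩).supp) :=
  Iff.rfl

theorem IsTree.isPerfectMatching_oddSidesSubgraph [Finite V] (hG : G.IsTree)
    (h : ∀ v : V, ∃! c : (G.induce {u | u ≠ v}).ConnectedComponent, Odd (Nat.card c.supp)) :
    G.oddSidesSubgraph.IsPerfectMatching := by
  simp only [Subgraph.isPerfectMatching_iff, oddSidesSubgraph_adj]
  intro a
  obtain ⟨c, hc, hcu⟩ := h a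
  have hV := even_card_of_existsUnique_odd_card_supp a (h a)
  obtain ⟨b, hab, rfl⟩ := hG.connected.exists_adj_connectedComponentMk_eq c
  refine ⟨b, ⟨hab, hc, hG.odd_card_supp_of_odd_card_supp hV hab hc⟩, ?_⟩
  rintro b' ⟨hab', hb', -⟩
  exact (hG.isAcyclic.eq_of_adj_of_connectedComponentMk_eq hab hab' (hcu _ hb').symm).symm

end SimpleGraph

theorem tree_perfect_matching_iff_general (V : Type) [Fintype V]
    (T : SimpleGraph V) (hT : T.IsTree) :
    (∃ M : T.Subgraph, M.IsPerfectMatching) ↔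
      ∀ v : V, ∃! c : (T.induce {u | u ≠ v}).ConnectedComponent, Odd (Nat.card c.supp) :=
  ⟨fun ⟨_, hM⟩ => hM.existsUnique_odd_card_supp,
    fun h => ⟨_, hT.isPerfectMatching_oddSidesSubgraph h⟩⟩

/-- A tree `T` has a perfect matching if and only if for every vertex `v`, the forest
obtained by deleting `v` has exactly one connected component with an odd number of vertices. -/
theorem tree_perfect_matching_iff (V : Type) [Fintype V] [DecidableEq V]
    (T : SimpleGraph V) (hT : T.IsTree) :
    (∃ M : T.Subgraph, M.IsPerfectMatching) ↔
      ∀ v : V, ∃! c : (T.induce {u | u ≠ v}).ConnectedComponent, Odd (Nat.card c.supp) :=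
  tree_perfect_matching_iff_general V T hT
end

section
/- If a tree T has a vertex v of degree d \geq 3 whose deletion leaves subtrees of sizes t_1 \geq ... \geq t_d, and T has a connected partition of type \mu, then the spider S(t_1,...,t_d) also has a connected partition of type \mu. -/
open SimpleGraph

/-- The spider graph with `d` legs of lengths `l i`: a centre vertex (`none`)
joined to one endpoint of each of `d` disjoint paths with `l i` vertices. -/
def spider (d : ℕ) (l : Fin d → ℕ) : SimpleGraph (Option (Σ i : Fin d, Fin (l i))) :=
  SimpleGraph.fromRel (fun u v =>
    (∃ (i : Fin d) (h : 0 < l i), u = none ∧ v = some ⟨i, ⟨0, h⟩⟩) ∨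
    (∃ (i : Fin d) (j k : Fin (l i)), (j : ℕ) + 1 = (k : ℕ) ∧ u = some ⟨i, j⟩ ∧ v = some ⟨i, k⟩))

/-- A graph has a connected partition of type `μ` if its vertex set can be partitioned
into blocks, each inducing a connected subgraph, whose multiset of sizes is `μ`. -/
def HasConnectedPartition {V : Type} [Fintype V] [DecidableEq V]
    (G : SimpleGraph V) (μ : Multiset ℕ) : Prop :=
  ∃ P : Finpartition (Finset.univ : Finset V),
    (∀ p ∈ P.parts, (G.induce (p : Set V)).Connected) ∧
    P.parts.val.map Finset.card = μ

/-!
Order the vertices of `T` block by block, the block of `v` first. Sending `v` to the centre and the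
`k`-th vertex (in this order) of the `i`-th branch at `v` to the `k`-th vertex of the `i`-th leg is a
bijection onto the spider. It maps the block of `v` onto the centre together with an initial segment of
every leg, and every other block, which lies in a single branch and is consecutive there, onto a
segment of a single leg. So all image blocks are connected and have the sizes of the original ones.
-/

open Finset Function

theorem SimpleGraph.induce_connected_of_exists_adj_lt {W : Type*} (G : SimpleGraph W) {S : Set W}
    (m : W → ℕ) {r : W} (hr : r ∈ S) (h : ∀ x ∈ S, x ≠ r → ∃ y ∈ S, G.Adj x y ∧ m y < m x) :
    (G.induce S).Connected := by
  have reach : ∀ x (hx : x ∈ S), (G.induce S).Reachable ⟨r, hr⟩ ⟨x, hx⟩ := by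
    intro x
    induction x using (measure m).wf.induction with
    | h x ih =>
      intro hx
      obtain rfl | hxr := eq_or_ne x r
      · rfl
      obtain ⟨y, hy, hxy, hlt⟩ := h x hx hxr
      exact (ih y hlt hy).trans (Adj.reachable (by simpa using hxy.symm))
  exact (connected_iff_exists_forall_reachable _).2 ⟨⟨r, hr⟩, fun x => reach x x.2⟩

theorem SimpleGraph.Connected.exists_subset_image_supp {V : Type*} {G : SimpleGraph V}
    {X Y : Set V} (h : (G.induce Y).Connected) (hYX : Y ⊆ X) :
    ∃ c : (G.induce X).ConnectedComponent, Y ⊆ Subtype.val '' c.supp := by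
  obtain ⟨⟨y, hy⟩⟩ := h.nonempty
  refine ⟨(G.induce X).connectedComponentMk ⟨y, hYX hy⟩, fun z hz => ⟨⟨z, hYX hz⟩, ?_, rfl⟩⟩
  rw [ConnectedComponent.mem_supp_iff, ConnectedComponent.eq]
  exact (h.preconnected ⟨z, hz⟩ ⟨y, hy⟩).map (G.induceHomOfLE hYX).toHom

theorem HasConnectedPartition.of_equiv {V W : Type} [Fintype V] [DecidableEq V] [Fintype W]
    [DecidableEq W] {H : SimpleGraph W} (f : W ≃ V) (P : Finpartition (univ : Finset V))
    (hP : ∀ p ∈ P.parts, (H.induce (f ⁻¹' p)).Connected) :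
    HasConnectedPartition H (P.parts.val.map card) := by
  let φ : Finset V ≃o Finset W := { f.symm.finsetCongr with map_rel_iff' := map_subset_map }
  refine ⟨(P.map φ).copy (map_univ_equiv f.symm), fun q hq => ?_, ?_⟩
  · obtain ⟨p, hp, rfl⟩ := mem_map.1 hq
    change (H.induce (p.map f.symm.toEmbedding : Set W)).Connected
    rw [coe_map, Equiv.coe_toEmbedding, Equiv.image_eq_preimage_symm, Equiv.symm_symm]
    exact hP p hp
  · change (P.parts.map φ.toEmbedding).val.map card = _
    rw [map_val, Multiset.map_map]
    exact Multiset.map_congr rfl fun p _ => card_map _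

section Branch

variable {V : Type*} [Finite V] {G : SimpleGraph V} {v : V} {d : ℕ}
  (e : (G.induce {u | u ≠ v}).ConnectedComponent ≃ Fin d)

noncomputable def branch (i : Fin d) : Finset V :=
  (Subtype.val '' (e.symm i).supp).toFinite.toFinset

variable {e}

theorem mem_branch {u : V} {i : Fin d} :
    u ∈ branch e i ↔ ∃ hu : u ≠ v, e ((G.induce {u | u ≠ v}).connectedComponentMk ⟨u, hu⟩) = i := by
  simp [branch, Equiv.eq_symm_apply]

theorem notMem_branch (i : Fin d) : v ∉ branch e i := by
  simp [mem_branch]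

theorem card_branch (i : Fin d) : #(branch e i) = Nat.card (e.symm i).supp := by
  rw [branch, ← Set.ncard_eq_toFinset_card, Set.ncard_image_of_injective _ Subtype.val_injective,
    Nat.card_coe_set_eq]

theorem pairwise_disjoint_branch : Pairwise (Disjoint on branch e) := fun _ _ hij =>
  Set.Finite.disjoint_toFinset.2 <| (Set.disjoint_image_iff Subtype.val_injective).2 <|
    pairwise_disjoint_supp_connectedComponent _ (e.symm.injective.ne hij)

theorem SimpleGraph.Connected.exists_subset_branch {Y : Set V} (h : (G.induce Y).Connected)
    (hvY : v ∉ Y) : ∃ i, Y ⊆ branch e i := by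
  obtain ⟨c, hc⟩ := h.exists_subset_image_supp fun u hu (huv : u = v) => hvY (huv ▸ hu)
  refine ⟨e c, fun u hu => ?_⟩
  obtain ⟨⟨u, huv⟩, huc, rfl⟩ := hc hu
  exact mem_branch.2 ⟨huv, congrArg e huc⟩

end Branch

section Spider

variable {d : ℕ} {l : Fin d → ℕ}

def spiderParent : (Σ i : Fin d, Fin (l i)) → Option (Σ i : Fin d, Fin (l i))
  | ⟨_, ⟨0, _⟩⟩ => none
  | ⟨i, ⟨k + 1, hk⟩⟩ => some ⟨i, ⟨k, k.lt_of_succ_lt hk⟩⟩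

theorem spider_adj_spiderParent :
    ∀ a : Σ i : Fin d, Fin (l i), (spider d l).Adj (some a) (spiderParent a)
  | ⟨i, ⟨0, h⟩⟩ => by simpa [spider, spiderParent] using h
  | ⟨i, ⟨k + 1, h⟩⟩ => by
    simp only [spider, fromRel_adj, spiderParent]
    exact ⟨by simp, Or.inr (Or.inr ⟨i, ⟨k, _⟩, ⟨k + 1, h⟩, rfl, rfl, rfl⟩)⟩

theorem spider_induce_connected_of_spiderParent_mem {S : Set (Option (Σ i : Fin d, Fin (l i)))}
    {r : Option (Σ i : Fin d, Fin (l i))} (hr : r ∈ S) (hnone : none ∈ S → none = r)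
    (hparent : ∀ a, some a ∈ S → some a ≠ r → spiderParent a ∈ S) :
    ((spider d l).induce S).Connected := by
  refine (spider d l).induce_connected_of_exists_adj_lt (Option.elim · 0 (·.2 + 1)) hr ?_
  rintro (_ | a) hx hxr
  · exact absurd (hnone hx) hxr
  · refine ⟨_, hparent a hx hxr, spider_adj_spiderParent a, ?_⟩
    rcases a with ⟨i, ⟨_ | k, hk⟩⟩ <;> simp [spiderParent]

end Spider

section SpiderMap

variable {V : Type*} [LinearOrder V] {d : ℕ} {t : Fin d → ℕ} (v : V) {s : Fin d → Finset V}
  (hs : ∀ i, #(s i) = t i)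

def spiderMap : Option (Σ i : Fin d, Fin (t i)) → V
  | none => v
  | some ⟨i, k⟩ => (s i).orderEmbOfFin (hs i) k

theorem spiderMap_mem (i : Fin d) (k : Fin (t i)) : spiderMap v hs (some ⟨i, k⟩) ∈ s i :=
  orderEmbOfFin_mem _ _ _

theorem spiderMap_bijective (hv : ∀ i, v ∉ s i) (hdisj : Pairwise (Disjoint on s))
    (hcover : ∀ u, u ≠ v → ∃ i, u ∈ s i) : Bijective (spiderMap v hs) := by
  refine ⟨?_, fun u => ?_⟩
  · rintro (_ | ⟨i, k⟩) (_ | ⟨j, k'⟩) h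
    · rfl
    · exact (hv j ((show v = _ from h) ▸ spiderMap_mem v hs j k')).elim
    · exact (hv i ((show _ = v from h) ▸ spiderMap_mem v hs i k)).elim
    · obtain rfl : i = j := by
        by_contra hij
        exact disjoint_left.1 (hdisj hij) (spiderMap_mem v hs i k) (h ▸ spiderMap_mem v hs j k')
      rw [(s i).orderEmbOfFin (hs i) |>.injective h]
  · obtain rfl | hu := eq_or_ne u v
    · exact ⟨none, rfl⟩
    obtain ⟨i, hi⟩ := hcover u hu
    obtain ⟨k, hk⟩ : u ∈ Set.range ((s i).orderEmbOfFin (hs i)) := by rwa [range_orderEmbOfFin]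
    exact ⟨some ⟨i, k⟩, hk⟩

theorem spider_induce_preimage_spiderMap_connected_of_isLowerSet {B : Set V} (hB : IsLowerSet B)
    (hvB : v ∈ B) : ((spider d t).induce (spiderMap v hs ⁻¹' B)).Connected := by
  refine spider_induce_connected_of_spiderParent_mem (r := none) hvB (fun _ => rfl) ?_
  rintro ⟨i, ⟨_ | k, hk⟩⟩ ha -
  · exact hvB
  · exact hB (((s i).orderEmbOfFin (hs i)).monotone (Fin.mk_le_mk.2 k.le_succ)) ha

theorem spider_induce_preimage_spiderMap_connected_of_ordConnected
    (hdisj : Pairwise (Disjoint on s)) {i : Fin d} {B : Set V} (hB : B.OrdConnected)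
    (hBs : B ⊆ s i) (hvB : v ∉ B) (hne : B.Nonempty) :
    ((spider d t).induce (spiderMap v hs ⁻¹' B)).Connected := by
  set f := (s i).orderEmbOfFin (hs i)
  have hleg : ∀ j (k : Fin (t j)), spiderMap v hs (some ⟨j, k⟩) ∈ B → j = i := fun j k hk => by
    by_contra hji
    exact disjoint_left.1 (hdisj hji) (spiderMap_mem v hs j k) (hBs hk)
  obtain ⟨a, ha, hmin⟩ := (f ⁻¹' B).exists_min_image id (f ⁻¹' B).toFinite (by
    obtain ⟨u, hu⟩ := hne
    obtain ⟨k, rfl⟩ : u ∈ Set.range f := by rw [range_orderEmbOfFin]; exact hBs hu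
    exact ⟨k, hu⟩)
  refine spider_induce_connected_of_spiderParent_mem (r := some ⟨i, a⟩) ha
    (fun h => absurd h hvB) ?_
  rintro ⟨j, k⟩ hk hka
  obtain rfl := hleg j k hk
  have hak : a < k := (hmin k hk).lt_of_ne fun h => hka (by rw [show a = k from h])
  rcases k with ⟨_ | k, hk'⟩
  · exact absurd hak (Nat.not_lt_zero _)
  · exact hB.out ha hk ⟨f.monotone (Nat.le_of_lt_succ hak), f.monotone (Nat.le_succ k)⟩

end SpiderMap

namespace Finpartition

variable {V : Type*} [Fintype V] [DecidableEq V] (P : Finpartition (univ : Finset V)) (v : V)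

noncomputable def blockIndex (u : V) : ℕ :=
  if P.part u = P.part v then 0 else Fintype.equivFin (Finset V) (P.part u) + 1

theorem blockIndex_eq_blockIndex_iff {u w : V} :
    P.blockIndex v u = P.blockIndex v w ↔ P.part u = P.part w := by
  unfold blockIndex
  split_ifs with hu hw hw <;> simp_all [Fin.val_inj, eq_comm]

theorem coe_part_eq_preimage_blockIndex (u : V) :
    (P.part u : Set V) = P.blockIndex v ⁻¹' {P.blockIndex v u} := by
  ext w
  simp [blockIndex_eq_blockIndex_iff, mem_part_iff_part_eq_part]

variable {P v} [Preorder V]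

theorem isLowerSet_part (hb : Monotone (P.blockIndex v)) : IsLowerSet (P.part v : Set V) := by
  have hv : P.blockIndex v v = 0 := if_pos rfl
  rw [P.coe_part_eq_preimage_blockIndex v v, hv]
  intro w u hwu (hu : _ = 0)
  exact Nat.le_zero.1 (hu ▸ hb hwu)

theorem ordConnected_of_mem_parts (hb : Monotone (P.blockIndex v)) {p : Finset V}
    (hp : p ∈ P.parts) : (p : Set V).OrdConnected := by
  obtain ⟨u, hu⟩ := P.nonempty_of_mem_parts hp
  rw [← P.part_eq_of_mem hp hu, P.coe_part_eq_preimage_blockIndex v u]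
  exact Set.ordConnected_singleton.preimage_mono hb

end Finpartition

theorem tree_connected_partition_to_spider_general {V : Type} [Fintype V] [DecidableEq V]
    (T : SimpleGraph V) (v : V)
    (d : ℕ) (t : Fin d → ℕ)
    (e : (T.induce {u | u ≠ v}).ConnectedComponent ≃ Fin d)
    (hsize : ∀ c, Nat.card c.supp = t (e c))
    (μ : Multiset ℕ) (h : HasConnectedPartition T μ) :
    HasConnectedPartition (spider d t) μ := by
  obtain ⟨P, hPconn, rfl⟩ := h
  let : LinearOrder V := LinearOrder.lift' (fun u => toLex (P.blockIndex v u, Fintype.equivFin V u))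
    fun u w h => (Fintype.equivFin V).injective (congrArg (fun x => (ofLex x).2) h)
  have hb : Monotone (P.blockIndex v) := fun u w => Prod.Lex.monotone_fst _ _
  have hs i : #(branch e i) = t i := by rw [card_branch, hsize, e.apply_symm_apply]
  have hbij := spiderMap_bijective v hs notMem_branch pairwise_disjoint_branch
    fun u hu => ⟨_, mem_branch.2 ⟨hu, rfl⟩⟩
  refine HasConnectedPartition.of_equiv (.ofBijective _ hbij) P fun p hp => ?_
  by_cases hvp : v ∈ p
  · rw [← P.part_eq_of_mem hp hvp]
    exact spider_induce_preimage_spiderMap_connected_of_isLowerSet v hs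
      (Finpartition.isLowerSet_part hb) (P.mem_part (mem_univ v))
  · obtain ⟨i, hi⟩ := (hPconn p hp).exists_subset_branch (e := e) hvp
    exact spider_induce_preimage_spiderMap_connected_of_ordConnected v hs pairwise_disjoint_branch
      (Finpartition.ordConnected_of_mem_parts hb hp) hi hvp (P.nonempty_of_mem_parts hp)

/-- If a tree `T` has a vertex `v` of degree `d ≥ 3` whose deletion leaves subtrees of sizes
`t 0 ≥ ... ≥ t (d-1)`, and `T` has a connected partition of type `μ`, then the spider
`S(t)` has a connected partition of type `μ` as well. -/
theorem tree_connected_partition_to_spider {V : Type} [Fintype V] [DecidableEq V]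
    (T : SimpleGraph V) [DecidableRel T.Adj] (hT : T.IsTree) (v : V)
    (d : ℕ) (hd : 3 ≤ d) (hdeg : T.degree v = d)
    (t : Fin d → ℕ) (hmono : ∀ i j : Fin d, i ≤ j → t j ≤ t i)
    (e : (T.induce {u | u ≠ v}).ConnectedComponent ≃ Fin d)
    (hsize : ∀ c, Nat.card c.supp = t (e c))
    (μ : Multiset ℕ) (h : HasConnectedPartition T μ) :
    HasConnectedPartition (spider d t) μ :=
  tree_connected_partition_to_spider_general T v d t e hsize μ h
end

section
/- If a connected graph G has a cut vertex v whose deletion produces connected components of sizes c_1 \geq ... \geq c_d with d \geq 3, and G has a connected partition of type \mu, then the spider S(c_1,...,c_d) also has a connected partition of type \mu. -/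
/-! Let `B` be the block containing `v`. Every other block is connected and avoids `v`, so it lies
in a single component of `G - v`. Enumerate each component starting with its vertices in `B` and
then block by block, and send `v` to the centre and the `k`-th vertex of the `i`-th component to
the `k`-th vertex of the `i`-th leg. This bijection carries `B` to a set containing the centre and
an initial segment of every leg, and every other block to a subpath of one leg; both are
connected, so the image partition of the spider has the same type. -/

open SimpleGraph

namespace SimpleGraph

variable {W : Type*} {H : SimpleGraph W}

theorem induce_connected_of_exists_adj_lt_s5 {T : Set W} {b : W} (hb : b ∈ T) (r : W → ℕ)
    (hdesc : ∀ x ∈ T, x ≠ b → ∃ y ∈ T, H.Adj x y ∧ r y < r x) : (H.induce T).Connected := by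
  rw [connected_iff_exists_forall_reachable]
  refine ⟨⟨b, hb⟩, ?_⟩
  suffices ∀ n, ∀ x (hx : x ∈ T), r x = n → (H.induce T).Reachable ⟨b, hb⟩ ⟨x, hx⟩ from
    fun x => this _ x.1 x.2 rfl
  intro n
  induction n using Nat.strong_induction_on with
  | _ n ih =>
    intro x hx hxn
    by_cases hxb : x = b
    · subst hxb; rfl
    obtain ⟨y, hy, hxy, hr⟩ := hdesc x hx hxb
    exact (ih _ (hxn ▸ hr) y hy rfl).trans (Adj.reachable (G := H.induce T) hxy.symm)

theorem connectedComponentMk_induce_eq {s t : Set W} (hs : (H.induce s).Preconnected)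
    (hst : s ⊆ t) {x y : t} (hx : (x : W) ∈ s) (hy : (y : W) ∈ s) :
    (H.induce t).connectedComponentMk x = (H.induce t).connectedComponentMk y :=
  ConnectedComponent.sound ((hs ⟨x, hx⟩ ⟨y, hy⟩).map (induceHomOfLE H hst).toHom)

end SimpleGraph

theorem hasConnectedPartition_of_equiv {V W : Type} [Fintype V] [DecidableEq V] [Fintype W]
    [DecidableEq W] {H : SimpleGraph W} (f : W ≃ V) (P : Finpartition (Finset.univ : Finset V))
    (hP : ∀ p ∈ P.parts, (H.induce (f ⁻¹' p)).Connected) :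
    HasConnectedPartition H (P.parts.val.map Finset.card) := by
  let F : Finset V ≃o Finset W := f.symm.finsetCongr.toOrderIso
    (fun _ _ => Finset.map_subset_map.2) (fun _ _ => Finset.map_subset_map.2)
  have hF : ∀ p, (F p : Set W) = f ⁻¹' p := fun p => by
    change (p.map f.symm.toEmbedding : Set W) = _
    rw [Finset.coe_map, Equiv.coe_toEmbedding, Equiv.image_symm_eq_preimage]
  refine ⟨(P.map F).copy (Finset.map_univ_equiv f.symm), ?_, ?_⟩
  · simp only [Finpartition.copy, Finpartition.parts_map, Finset.forall_mem_map]
    intro p hp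
    change (H.induce (F p : Set W)).Connected
    rw [hF]
    exact hP p hp
  · simp only [Finpartition.copy, Finpartition.parts_map, Finset.map_val, Multiset.map_map]
    exact Multiset.map_congr rfl fun p _ => Finset.card_map _

theorem exists_fin_equiv_monotone {X κ : Type*} [Finite X] [LinearOrder κ] {n : ℕ}
    (hn : Nat.card X = n) (key : X → κ) : ∃ f : Fin n ≃ X, Monotone (key ∘ f) := by
  have := Fintype.ofFinite X
  let _ : LinearOrder X := LinearOrder.lift' (fun x => toLex (key x, Fintype.equivFin X x))
    fun x y h => (Fintype.equivFin X).injective (congrArg Prod.snd (toLex.injective h))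
  let f := Fintype.orderIsoFinOfCardEq X (Fintype.card_eq_nat_card.trans hn)
  exact ⟨f.toEquiv, fun a b hab => Prod.Lex.monotone_fst _ _ (f.monotone hab)⟩

theorem exists_sigma_fin_equiv_monotone {X ι κ : Type*} [Finite X] [LinearOrder κ]
    (leg : X → ι) (c : ι → ℕ) (hc : ∀ i, Nat.card {x // leg x = i} = c i) (key : X → κ) :
    ∃ φ : (Σ i, Fin (c i)) ≃ X, (∀ s, leg (φ s) = s.1) ∧
      ∀ i, Monotone fun a : Fin (c i) => key (φ ⟨i, a⟩) := by
  choose f hf using fun i => exists_fin_equiv_monotone (hc i) fun x => key x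
  exact ⟨(Equiv.sigmaCongrRight f).trans (Equiv.sigmaFiberEquiv leg), fun s => (f s.1 s.2).2,
    hf⟩

theorem exists_injective_nat_eq_zero {α : Type*} [Countable α] (b : α) :
    ∃ ρ : α → ℕ, Function.Injective ρ ∧ ρ b = 0 := by
  obtain ⟨f, hf⟩ := Countable.exists_injective_nat α
  exact ⟨Equiv.swap (f b) 0 ∘ f, (Equiv.injective _).comp hf, Equiv.swap_apply_left _ _⟩

section Spider

variable {d : ℕ} {l : Fin d → ℕ}

theorem spider_adj_none_some {i : Fin d} {j : Fin (l i)} (hj : (j : ℕ) = 0) :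
    (spider d l).Adj none (some ⟨i, j⟩) := by
  have h0 : 0 < l i := hj ▸ j.2
  obtain rfl : j = ⟨0, h0⟩ := Fin.ext hj
  exact (fromRel_adj _ _ _).2 ⟨by simp, .inl (.inl ⟨i, _, rfl, rfl⟩)⟩

theorem spider_adj_some_some {i : Fin d} {j k : Fin (l i)} (hjk : (j : ℕ) + 1 = k) :
    (spider d l).Adj (some ⟨i, j⟩) (some ⟨i, k⟩) := by
  refine (fromRel_adj _ _ _).2 ⟨fun h => ?_, .inl (.inr ⟨i, j, k, hjk, rfl, rfl⟩)⟩
  simp only [Option.some.injEq, Sigma.mk.inj_iff, heq_eq_eq, true_and] at h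
  omega

def spiderDepth : Option (Σ i : Fin d, Fin (l i)) → ℕ
  | none => 0
  | some s => s.2 + 1

theorem spider_induce_connected_of_down_closed {T : Set (Option (Σ i : Fin d, Fin (l i)))}
    (hT : none ∈ T)
    (hdown : ∀ i (j k : Fin (l i)), some ⟨i, j⟩ ∈ T → k ≤ j → some ⟨i, k⟩ ∈ T) :
    ((spider d l).induce T).Connected := by
  refine induce_connected_of_exists_adj_lt_s5 hT spiderDepth ?_
  rintro (_ | ⟨i, j⟩) hx hne
  · exact absurd rfl hne
  rcases Nat.eq_zero_or_pos j with hj | hj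
  · exact ⟨none, hT, (spider_adj_none_some hj).symm, by simp [spiderDepth]⟩
  · refine ⟨some ⟨i, ⟨j - 1, by omega⟩⟩, hdown i j _ hx (by simp [Fin.le_def]),
      (spider_adj_some_some (by simp; omega)).symm, by simp [spiderDepth]; omega⟩

theorem spider_induce_connected_of_ordConnected {T : Set (Option (Σ i : Fin d, Fin (l i)))}
    (i : Fin d) (hleg : ∀ x ∈ T, ∃ j, x = some ⟨i, j⟩) (hne : T.Nonempty)
    (hconv : ∀ j k m : Fin (l i), some ⟨i, j⟩ ∈ T → some ⟨i, m⟩ ∈ T → j ≤ k → k ≤ m →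
      some ⟨i, k⟩ ∈ T) :
    ((spider d l).induce T).Connected := by
  obtain ⟨b, hb, hmin⟩ := T.exists_min_image spiderDepth T.toFinite hne
  obtain ⟨m, rfl⟩ := hleg b hb
  refine induce_connected_of_exists_adj_lt_s5 hb spiderDepth fun x hx hne => ?_
  obtain ⟨j, rfl⟩ := hleg x hx
  have hmj : (m : ℕ) ≤ j := by simpa [spiderDepth] using hmin _ hx
  have hmj' : (m : ℕ) ≠ j := fun h => hne (by rw [Fin.ext h])
  refine ⟨some ⟨i, ⟨j - 1, by omega⟩⟩,
    hconv m _ j hb hx (by simp [Fin.le_def]; omega) (by simp [Fin.le_def]),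
    (spider_adj_some_some (by simp; omega)).symm, by simp [spiderDepth]; omega⟩

end Spider

section Layout

variable {V : Type} [DecidableEq V] {v : V} {d : ℕ} {c : Fin d → ℕ}

def spiderLayout (φ : (Σ i : Fin d, Fin (c i)) ≃ {u // u ≠ v}) :
    Option (Σ i : Fin d, Fin (c i)) ≃ V :=
  (Equiv.optionCongr φ).trans (Equiv.optionSubtypeNe v)

variable (φ : (Σ i : Fin d, Fin (c i)) ≃ {u // u ≠ v}) {key : {u // u ≠ v} → ℕ} {p : Set V}

theorem spiderLayout_preimage_connected_of_mem
    (hφ : ∀ i, Monotone fun a : Fin (c i) => key (φ ⟨i, a⟩)) (hv : v ∈ p)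
    (hp : ∀ x, ↑x ∈ p ↔ key x = 0) :
    ((spider d c).induce (spiderLayout φ ⁻¹' p)).Connected :=
  spider_induce_connected_of_down_closed hv fun i j k hj hkj =>
    (hp (φ ⟨i, k⟩)).2 (Nat.le_zero.1 ((hφ i hkj).trans ((hp (φ ⟨i, j⟩)).1 hj).le))

theorem spiderLayout_preimage_connected_of_notMem
    (hφ : ∀ i, Monotone fun a : Fin (c i) => key (φ ⟨i, a⟩)) (hv : v ∉ p) (hne : p.Nonempty)
    (i : Fin d) (hleg : ∀ s, ↑(φ s) ∈ p → s.1 = i) {k : ℕ} (hp : ∀ x, ↑x ∈ p ↔ key x = k) :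
    ((spider d c).induce (spiderLayout φ ⁻¹' p)).Connected := by
  obtain ⟨u, hu⟩ := hne
  refine spider_induce_connected_of_ordConnected i ?_ ⟨(spiderLayout φ).symm u, by simpa⟩
    fun j k' m hj hm hjk hkm => (hp (φ ⟨i, k'⟩)).2 (le_antisymm ?_ ?_)
  · rintro (_ | s) hx
    · exact absurd hx hv
    · obtain rfl := hleg s hx
      exact ⟨s.2, rfl⟩
  · exact (hφ i hkm).trans ((hp (φ ⟨i, m⟩)).1 hm).le
  · exact ((hp (φ ⟨i, j⟩)).1 hj).symm.le.trans (hφ i hjk)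

end Layout

theorem graph_connected_partition_to_spider_general {V : Type} [Fintype V] [DecidableEq V]
    (G : SimpleGraph V) (v : V) (d : ℕ) (c : Fin d → ℕ)
    (e : (G.induce {u | u ≠ v}).ConnectedComponent ≃ Fin d)
    (hsize : ∀ comp, Nat.card comp.supp = c (e comp))
    (μ : Multiset ℕ) (h : HasConnectedPartition G μ) :
    HasConnectedPartition (spider d c) μ := by
  obtain ⟨P, hPconn, rfl⟩ := h
  let leg : {u // u ≠ v} → Fin d := fun x => e ((G.induce {u | u ≠ v}).connectedComponentMk x)
  have hcard : ∀ i, Nat.card {x // leg x = i} = c i := fun i =>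
    (Nat.card_congr (Equiv.subtypeEquivRight fun x => by
      rw [ConnectedComponent.mem_supp_iff, Equiv.eq_symm_apply])).trans
    ((hsize _).trans (congrArg c (e.apply_symm_apply i)))
  -- ranking blocks by `ρ` lists each component block by block, the block of `v` first
  obtain ⟨ρ, hρ, hρv⟩ := exists_injective_nat_eq_zero (P.part v)
  obtain ⟨φ, hφleg, hφ⟩ := exists_sigma_fin_equiv_monotone leg c hcard fun x => ρ (P.part x)
  refine hasConnectedPartition_of_equiv (spiderLayout φ) P fun p hp => ?_
  have hlevel : ∀ x : {u // u ≠ v}, ↑x ∈ p ↔ ρ (P.part x) = ρ p := fun x => by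
    rw [hρ.eq_iff, P.part_eq_iff_mem hp]
  by_cases hvp : v ∈ p
  · rw [P.part_eq_of_mem hp hvp] at hρv
    exact spiderLayout_preimage_connected_of_mem φ hφ hvp (hρv ▸ hlevel)
  obtain ⟨u, hu⟩ := P.nonempty_of_mem_parts hp
  have hpv : (p : Set V) ⊆ {u | u ≠ v} := fun w hw hwv => hvp (hwv ▸ hw)
  refine spiderLayout_preimage_connected_of_notMem φ hφ hvp ⟨u, hu⟩
    (leg ⟨u, hpv hu⟩) (fun s hs => ?_) hlevel
  rw [← hφleg s]
  exact congrArg e (connectedComponentMk_induce_eq (hPconn p hp).preconnected hpv hs hu)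

/-- If a connected graph `G` has a cut vertex `v` whose deletion produces `d ≥ 3` connected
components of sizes `c 0 ≥ ... ≥ c (d-1)`, and `G` has a connected partition of type `μ`,
then the spider `S(c)` has a connected partition of type `μ` as well. -/
theorem graph_connected_partition_to_spider {V : Type} [Fintype V] [DecidableEq V]
    (G : SimpleGraph V) (hG : G.Connected) (v : V)
    (d : ℕ) (hd : 3 ≤ d)
    (c : Fin d → ℕ) (hmono : ∀ i j : Fin d, i ≤ j → c j ≤ c i)
    (e : (G.induce {u | u ≠ v}).ConnectedComponent ≃ Fin d)
    (hsize : ∀ comp, Nat.card comp.supp = c (e comp))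
    (μ : Multiset ℕ) (h : HasConnectedPartition G μ) :
    HasConnectedPartition (spider d c) μ :=
  graph_connected_partition_to_spider_general G v d c e hsize μ h
end

section
/- Let \lambda be a partition of n-1 with at least 3 parts and maximum part m. If m < \lfloor n/2 \rfloor, then the n-vertex spider S(\lambda) has no connected partition of type (n-m-1, m+1). -/
open SimpleGraph

lemma spider_adj_leg {d : ℕ} {l : Fin d → ℕ} {u v : Option (Σ i : Fin d, Fin (l i))}
    (h : (spider d l).Adj u v) (hu : u ≠ none) (hv : v ≠ none) :
    Option.map Sigma.fst u = Option.map Sigma.fst v := by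
  obtain (_|su) := u; · simp at hu
  obtain (_|sv) := v; · simp at hv
  simp only [spider, SimpleGraph.fromRel_adj] at h
  rcases h with ⟨-, (⟨_, _, h1, _⟩|⟨a, b, c, _, h1, h2⟩)|(⟨_, _, h1, _⟩|⟨a, b, c, _, h1, h2⟩)⟩ <;>
    simp_all

lemma spider_reach_leg {d : ℕ} {l : Fin d → ℕ} {S : Set (Option (Σ i : Fin d, Fin (l i)))}
    (hS : (none : Option (Σ i : Fin d, Fin (l i))) ∉ S) {a b : S}
    (h : ((spider d l).induce S).Reachable a b) :
    Option.map Sigma.fst (a : Option (Σ i : Fin d, Fin (l i))) =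
      Option.map Sigma.fst (b : Option (Σ i : Fin d, Fin (l i))) := by
  obtain ⟨w⟩ := h
  induction w with
  | nil => rfl
  | @cons x y z hadj p ih =>
      refine Eq.trans ?_ ih
      have hx : (x : Option (Σ i : Fin d, Fin (l i))) ≠ none := fun h => hS (h ▸ x.2)
      have hy : (y : Option (Σ i : Fin d, Fin (l i))) ≠ none := fun h => hS (h ▸ y.2)
      exact spider_adj_leg hadj hx hy

/-- Let `λ ⊢ n-1` have at least 3 parts and maximum part `m`. If `m < ⌊n/2⌋`, then the
`n`-vertex spider `S(λ)` has no connected partition of type `(n-m-1, m+1)`. -/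
theorem spider_short_legs_missing (d n m : ℕ) (hd : 3 ≤ d) (l : Fin d → ℕ)
    (hpos : ∀ i, 0 < l i) (hmono : ∀ i j : Fin d, i ≤ j → l j ≤ l i)
    (hn : n = 1 + ∑ i, l i)
    (hmax : ∀ i, l i ≤ m) (hmax' : ∃ i, l i = m)
    (hm : m < n / 2) :
    ¬ HasConnectedPartition (spider d l) {n - m - 1, m + 1} := by
  rintro ⟨P, hconn, hcard⟩
  have hn2 : 2 * m + 2 ≤ n := by omega
  -- every part contains the centre `none`
  have key : ∀ p ∈ P.parts, (none : Option (Σ i : Fin d, Fin (l i))) ∈ p := by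
    intro p hp
    by_contra hnone
    have hne : p.Nonempty := P.nonempty_of_mem_parts hp
    have hcon := hconn p hp
    obtain ⟨v, hv⟩ := hne
    have hnone' : (none : Option (Σ i : Fin d, Fin (l i))) ∉ (p : Set _) := by
      simpa using hnone
    obtain (_|⟨i, j⟩) := v
    · exact hnone hv
    -- every vertex of p lies on leg i
    have hleg : ∀ w ∈ p, ∃ k : Fin (l i), w = some ⟨i, k⟩ := by
      intro w hw
      have hr : ((spider d l).induce (p : Set _)).Reachable
          ⟨some ⟨i, j⟩, by simpa using hv⟩ ⟨w, by simpa using hw⟩ :=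
        hcon.preconnected _ _
      have := spider_reach_leg hnone' hr
      obtain (_|⟨iw, kw⟩) := w
      · exact absurd hw hnone
      · simp only [Option.map_some, Option.some.injEq] at this
        subst this
        exact ⟨kw, rfl⟩
    have hsub : p ⊆ Finset.univ.image
        (fun k : Fin (l i) => (some ⟨i, k⟩ : Option (Σ i : Fin d, Fin (l i)))) := by
      intro w hw
      obtain ⟨k, rfl⟩ := hleg w hw
      simp
    have hle : p.card ≤ l i := by
      calc p.card ≤ _ := Finset.card_le_card hsub
        _ ≤ Finset.univ.card := Finset.card_image_le
        _ = l i := by simp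
    have hcm : p.card ≤ m := hle.trans (hmax i)
    have hmem : p.card ∈ ({n - m - 1, m + 1} : Multiset ℕ) := by
      rw [← hcard]
      exact Multiset.mem_map_of_mem _ hp
    rw [Multiset.insert_eq_cons, Multiset.mem_cons, Multiset.mem_singleton] at hmem
    rcases hmem with h | h <;> omega
  -- there are two distinct parts
  have hc2 : P.parts.card = 2 := by
    have := congrArg Multiset.card hcard
    simpa using this
  obtain ⟨A, hA, B, hB, hAB⟩ := Finset.one_lt_card.mp (by omega : 1 < P.parts.card)
  have hdisj : Disjoint A B := P.disjoint hA hB hAB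
  exact Finset.disjoint_left.mp hdisj (key A hA) (key B hB)
end

section
/- Let i \geq 0, let \lambda be a partition of N with at least two parts and maximum part m, and suppose the spider S(i,\lambda) has no connected partition of type \mu, where \mu is a partition of i+N+1 all of whose parts \mu_k satisfy m+1 \leq \mu_k \leq N. Then the spider S(i+N,\lambda) has no connected partition of type (N,\mu) (the partition obtained by adding one part equal to N to \mu). -/
open SimpleGraph

lemma eq_of_reachable' {α β : Type*} (G : SimpleGraph α) (f : α → β)
    (hf : ∀ a b, G.Adj a b → f a = f b) : ∀ {u v}, G.Reachable u v → f u = f v := by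
  intro u v h
  obtain ⟨w⟩ := h
  induction w with
  | nil => rfl
  | cons h p ih => exact (hf _ _ h).trans ih

lemma spider_adj_fst {d : ℕ} {L : Fin d → ℕ} {a b : Σ j : Fin d, Fin (L j)}
    (h : (spider d L).Adj (some a) (some b)) : a.1 = b.1 := by
  rw [spider, fromRel_adj] at h
  rcases h.2 with (⟨_, _, hu, _⟩ | ⟨i', j', k', _, hu, hv⟩) | (⟨_, _, hu, _⟩ | ⟨i', j', k', _, hu, hv⟩)
  · exact absurd hu (by simp)
  · simp only [Option.some.injEq] at hu hv
    rw [hu, hv]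
  · exact absurd hu (by simp)
  · simp only [Option.some.injEq] at hu hv
    rw [hu, hv]

lemma spider_connected_same_leg {d : ℕ} {L : Fin d → ℕ}
    {S : Set (Option (Σ j : Fin d, Fin (L j)))}
    (hc : ((spider d L).induce S).Connected) (hn : (none : Option (Σ j : Fin d, Fin (L j))) ∉ S)
    {a b : Σ j : Fin d, Fin (L j)} (ha : some a ∈ S) (hb : some b ∈ S) :
    a.1 = b.1 := by
  have hr := hc.preconnected ⟨some a, ha⟩ ⟨some b, hb⟩
  have := eq_of_reachable' ((spider d L).induce S)
    (fun x => x.val.elim a.1 Sigma.fst) ?_ hr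
  · simpa using this
  · rintro ⟨x, hx⟩ ⟨y, hy⟩ hadj
    match x, y with
    | none, _ => exact absurd hx hn
    | _, none => exact absurd hy hn
    | some u, some v => exact spider_adj_fst hadj

/-- The embedding of leg `a` into the vertex set of a spider. -/
def legEmb {d : ℕ} (L : Fin d → ℕ) (a : Fin d) :
    Fin (L a) ↪ Option (Σ j : Fin d, Fin (L j)) :=
  ⟨fun y => some ⟨a, y⟩, by intro x y hxy; simpa using hxy⟩

set_option maxHeartbeats 2000000 in
/-- If the spider `S(i, λ)` has no connected partition of type `μ`, where `μ ⊢ i+N+1` and all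
parts `μ_k` satisfy `m+1 ≤ μ_k ≤ N` (with `N = |λ|` and `m` the maximum part of `λ`, which has
at least two parts), then the spider `S(i+N, λ)` has no connected partition of type `(N, μ)`. -/
theorem spider_induction_missing (d N m i : ℕ) (hd : 2 ≤ d) (l : Fin d → ℕ)
    (hpos : ∀ j, 0 < l j) (hmono : ∀ j k : Fin d, j ≤ k → l k ≤ l j)
    (hN : N = ∑ j, l j)
    (hmax : ∀ j, l j ≤ m) (hmax' : ∃ j, l j = m)
    (μ : Multiset ℕ) (hμsum : μ.sum = i + N + 1)
    (hμ : ∀ k ∈ μ, m + 1 ≤ k ∧ k ≤ N)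
    (h : ¬ HasConnectedPartition (spider (d + 1) (Fin.cons i l)) μ) :
    ¬ HasConnectedPartition (spider (d + 1) (Fin.cons (i + N) l)) (N ::ₘ μ) := by
  clear h
  rintro ⟨P, hconn, hcard⟩
  obtain ⟨j₀, hj₀⟩ := hmax'
  -- N ≥ m + 1
  have hNm : m + 1 ≤ N := by
    have hne : ∃ j₁ : Fin d, j₀ ≠ j₁ := by
      by_cases hc : j₀ = ⟨0, by omega⟩
      · exact ⟨⟨1, by omega⟩, by rw [hc]; intro hx; simpa using hx⟩
      · exact ⟨⟨0, by omega⟩, hc⟩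
    obtain ⟨j₁, hne⟩ := hne
    have hpair : ∑ x ∈ ({j₀, j₁} : Finset (Fin d)), l x ≤ ∑ x, l x :=
      Finset.sum_le_sum_of_subset (Finset.subset_univ _)
    rw [Finset.sum_pair hne] at hpair
    have := hpos j₁
    omega
  have hall : ∀ k ∈ (N ::ₘ μ), m + 1 ≤ k ∧ k ≤ N := by
    intro k hk
    rcases Multiset.mem_cons.mp hk with rfl | hk
    · exact ⟨hNm, le_rfl⟩
    · exact hμ _ hk
  -- the block containing the centre
  obtain ⟨B₀, hB₀P, hB₀none⟩ := P.exists_mem (a := none) (Finset.mem_univ _)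
  have hcardmem : ∀ p ∈ P.parts, p.card ∈ (N ::ₘ μ) := by
    intro p hp
    rw [← hcard]
    exact Multiset.mem_map_of_mem _ (Finset.mem_def.mp hp)
  -- embeddings of legs into the vertex set
  have hlegcard : ∀ a : Fin (d + 1),
      (Finset.univ.map (legEmb (Fin.cons (i + N) l) a)).card = (Fin.cons (i + N) l : Fin (d+1) → ℕ) a := by
    intro a
    rw [Finset.card_map, Finset.card_univ, Fintype.card_fin]
  -- every non-centre part lies in leg 0
  have hsub : ∀ p ∈ P.parts, p ≠ B₀ → p ⊆ Finset.univ.map (legEmb (Fin.cons (i + N) l) 0) := by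
    intro p hp hne v hv
    have hnone_p : (none : Option (Σ j : Fin (d + 1), Fin ((Fin.cons (i + N) l : Fin (d+1) → ℕ) j))) ∉ p := by
      intro hc; exact hne (P.eq_of_mem_parts hp hB₀P hc hB₀none)
    have hvn : v ≠ none := fun hc => hnone_p (hc ▸ hv)
    obtain ⟨⟨a1, a2⟩, rfl⟩ := Option.ne_none_iff_exists'.mp hvn
    by_cases h0 : a1 = 0
    · subst h0
      exact Finset.mem_map.mpr ⟨a2, Finset.mem_univ _, rfl⟩
    · exfalso
      have hpleg : p ⊆ Finset.univ.map (legEmb (Fin.cons (i + N) l) a1) := by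
        intro w hw
        have hwn : w ≠ none := fun hc => hnone_p (hc ▸ hw)
        obtain ⟨⟨b1, b2⟩, rfl⟩ := Option.ne_none_iff_exists'.mp hwn
        have hab : a1 = b1 :=
          spider_connected_same_leg (hconn p hp) hnone_p hv hw
        subst hab
        exact Finset.mem_map.mpr ⟨b2, Finset.mem_univ _, rfl⟩
      obtain ⟨t, rfl⟩ : ∃ t : Fin d, t.succ = a1 := Fin.exists_succ_eq.mpr h0
      have hsmall : p.card ≤ m := by
        calc p.card ≤ _ := Finset.card_le_card hpleg
          _ = (Fin.cons (i + N) l : Fin (d+1) → ℕ) t.succ := hlegcard t.succ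
          _ = l t := by simp
          _ ≤ m := hmax t
      have hbig : m + 1 ≤ p.card := (hall _ (hcardmem p hp)).1
      omega
  -- counting
  have hdis : ∀ x ∈ P.parts.erase B₀, ∀ y ∈ P.parts.erase B₀, x ≠ y →
      Disjoint x y := fun x hx y hy hxy =>
    P.disjoint (Finset.mem_coe.mpr (Finset.mem_of_mem_erase hx))
      (Finset.mem_coe.mpr (Finset.mem_of_mem_erase hy)) hxy
  have hEsum : ∑ p ∈ P.parts.erase B₀, p.card ≤ i + N := by
    calc ∑ p ∈ P.parts.erase B₀, p.card
        = ((P.parts.erase B₀).biUnion fun x => x).card :=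
          (Finset.card_biUnion hdis).symm
      _ ≤ (Finset.univ.map (legEmb (Fin.cons (i + N) l) 0)).card := by
          apply Finset.card_le_card
          intro v hv
          rw [Finset.mem_biUnion] at hv
          obtain ⟨p, hpE, hvp⟩ := hv
          exact hsub p (Finset.mem_of_mem_erase hpE) (Finset.ne_of_mem_erase hpE) hvp
      _ = (Fin.cons (i + N) l : Fin (d+1) → ℕ) 0 := hlegcard 0
      _ = i + N := by simp
  have htotal : ∑ p ∈ P.parts, p.card = 1 + (i + N) + N := by
    rw [P.sum_card_parts, Finset.card_univ, Fintype.card_option, Fintype.card_sigma]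
    have hsum : ∑ j, Fin.cons (i + N) l j = (i + N) + N := by
      rw [Fin.sum_cons, ← hN]
    simp only [Fintype.card_fin]
    omega
  have hsplit : B₀.card + ∑ p ∈ P.parts.erase B₀, p.card = ∑ p ∈ P.parts, p.card :=
    Finset.add_sum_erase _ _ hB₀P
  have hB₀le : B₀.card ≤ N := (hall _ (hcardmem B₀ hB₀P)).2
  omega
end

section
/- Let S = S(\lambda_1,...,\lambda_d) be an n-vertex spider with \lambda a partition, \lambda_1 \geq \lambda_2 + ... + \lambda_d, \lambda_2 \leq \lambda_3 + ... + \lambda_d, and \lambda_2 \geq 2. Write n = q(\lambda_2+1) + r with 0 \leq r < \lambda_2+1, and r = q d' + r' with 0 \leq r' < q. If \lambda_2 \geq 3, or \lambda_2 = 2 and q \geq 3, then S has no connected partition of type consisting of r' parts equal to \lambda_2 + d' + 2 and q - r' parts equal to \lambda_2 + d' + 1. -/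
open SimpleGraph

section Aux
variable {d : ℕ} {l : Fin d → ℕ}

lemma spider_adj_some {i : Fin d} {j : Fin (l i)} {v : Option (Σ i : Fin d, Fin (l i))}
    (h : (spider d l).Adj (some ⟨i, j⟩) v) :
    v = none ∨ ∃ k : Fin (l i), v = some ⟨i, k⟩ := by
  rw [spider, fromRel_adj] at h
  obtain ⟨-, h | h⟩ := h
  · rcases h with ⟨i', h', h1, h2⟩ | ⟨i', j', k', hjk, h1, h2⟩
    · simp at h1
    · obtain ⟨rfl, -⟩ : i = i' ∧ HEq j j' := by
        simpa [Sigma.mk.inj_iff] using h1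
      exact Or.inr ⟨k', h2⟩
  · rcases h with ⟨i', h', h1, h2⟩ | ⟨i', j', k', hjk, h1, h2⟩
    · exact Or.inl h1
    · obtain ⟨rfl, -⟩ : i = i' ∧ HEq j k' := by
        simpa [Sigma.mk.inj_iff] using h2
      exact Or.inr ⟨j', h1⟩

lemma spider_walk_leg {i : Fin d} :
    ∀ {u w : Option (Σ i : Fin d, Fin (l i))} (p : (spider d l).Walk u w),
      (∃ j, u = some ⟨i, j⟩) → none ∉ p.support → ∃ k, w = some ⟨i, k⟩ := by
  intro u w p
  induction p with
  | nil => exact fun h _ => h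
  | @cons u v w h p ih =>
    rintro ⟨j, rfl⟩ hs
    rcases spider_adj_some h with rfl | ⟨k, rfl⟩
    · exact absurd (by simp [Walk.support_cons]) hs
    · exact ih ⟨k, rfl⟩ (fun hmem => hs (by simp [Walk.support_cons, hmem]))

end Aux

/-- Lemma on quotient constructions: let `S(λ)` be an `n`-vertex spider with
`λ_1 ≥ λ_2 + ... + λ_d`, `λ_2 ≤ λ_3 + ... + λ_d` and `λ_2 ≥ 2`. Write
`n = q(λ_2+1) + r`, `0 ≤ r < λ_2+1`, and `r = q d' + r'`, `0 ≤ r' < q`. If `λ_2 ≥ 3`,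
or `λ_2 = 2` and `q ≥ 3`, then `S(λ)` has no connected partition with `r'` blocks of size
`λ_2 + d' + 2` and `q - r'` blocks of size `λ_2 + d' + 1`. -/
theorem spider_quotient_missing (d n q r d' r' m2 : ℕ) (hd : 3 ≤ d) (l : Fin d → ℕ)
    (hpos : ∀ i, 0 < l i) (hmono : ∀ i j : Fin d, i ≤ j → l j ≤ l i)
    (hn : n = 1 + ∑ i, l i)
    (hm2 : l ⟨1, by omega⟩ = m2)
    (h1 : ∑ j ∈ Finset.univ.filter (fun j => (⟨0, by omega⟩ : Fin d) < j), l j ≤ l ⟨0, by omega⟩)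
    (h2 : m2 ≤ ∑ j ∈ Finset.univ.filter (fun j => (⟨1, by omega⟩ : Fin d) < j), l j)
    (h3 : 2 ≤ m2)
    (hq : n = q * (m2 + 1) + r) (hr : r < m2 + 1)
    (hd' : r = q * d' + r') (hr' : r' < q)
    (hcase : 3 ≤ m2 ∨ (m2 = 2 ∧ 3 ≤ q)) :
    ¬ HasConnectedPartition (spider d l)
      (Multiset.replicate r' (m2 + d' + 2) + Multiset.replicate (q - r') (m2 + d' + 1)) := by
  rintro ⟨P, hconn, hcard⟩
  let V := Option (Σ i : Fin d, Fin (l i))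
  have hd0 : (0 : ℕ) < d := by omega
  have hd1 : (1 : ℕ) < d := by omega
  -- every part has card between m2+d'+1 and m2+d'+2
  have hsize : ∀ p ∈ P.parts, m2 + d' + 1 ≤ p.card ∧ p.card ≤ m2 + d' + 2 := by
    intro p hp
    have : p.card ∈ Multiset.replicate r' (m2 + d' + 2) + Multiset.replicate (q - r') (m2 + d' + 1) := by
      rw [← hcard]
      exact Multiset.mem_map_of_mem _ hp
    rw [Multiset.mem_add, Multiset.mem_replicate, Multiset.mem_replicate] at this
    omega
  -- the block containing `none`
  obtain ⟨B0, hB0, hnoneB0⟩ := P.exists_mem (Finset.mem_univ (none : V))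
  -- every vertex of a leg i with 1 ≤ i.val is in B0
  have hlegmem : ∀ (i : Fin d), 1 ≤ i.val → ∀ j : Fin (l i), (some ⟨i, j⟩ : V) ∈ B0 := by
    intro i hi j
    obtain ⟨p, hp, hvp⟩ := P.exists_mem (Finset.mem_univ (some ⟨i, j⟩ : V))
    -- claim : none ∈ p
    have hnone : (none : V) ∈ p := by
      by_contra hnp
      -- then p ⊆ leg i
      have hsub : p ⊆ Finset.univ.image (fun k : Fin (l i) => (some ⟨i, k⟩ : V)) := by
        intro w hw
        have hreach := ((hconn p hp).preconnected ⟨some ⟨i, j⟩, hvp⟩ ⟨w, hw⟩)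
        obtain ⟨pw⟩ := hreach
        have hns : (none : V) ∉ (pw.map (Embedding.induce (p : Set V)).toHom).support := by
          intro hmem
          rw [Walk.support_map, List.mem_map] at hmem
          obtain ⟨x, -, hx⟩ := hmem
          have : (none : V) ∈ (p : Set V) := by rw [← hx]; exact x.2
          exact hnp this
        obtain ⟨k, hk⟩ := spider_walk_leg (pw.map (Embedding.induce (p : Set V)).toHom) ⟨j, rfl⟩ hns
        have hk' : w = some ⟨i, k⟩ := hk
        rw [hk']
        exact Finset.mem_image.mpr ⟨k, Finset.mem_univ _, rfl⟩
      have hle : p.card ≤ l i := by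
        calc p.card ≤ _ := Finset.card_le_card hsub
        _ ≤ (Finset.univ : Finset (Fin (l i))).card := Finset.card_image_le
        _ = l i := by simp
      have hli : l i ≤ m2 := by
        rw [← hm2]; exact hmono ⟨1, hd1⟩ i (by rw [Fin.le_def]; exact hi)
      have := (hsize p hp).1
      omega
    have := P.eq_of_mem_parts hp hB0 hnone hnoneB0
    rwa [← this]
  -- complement of B0 is inside leg 0
  have hcompl : Finset.univ \ B0 ⊆
      Finset.univ.image (fun k : Fin (l ⟨0, hd0⟩) => (some ⟨⟨0, hd0⟩, k⟩ : V)) := by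
    intro v hv
    rw [Finset.mem_sdiff] at hv
    obtain ⟨-, hvB⟩ := hv
    match v with
    | none => exact absurd hnoneB0 hvB
    | some ⟨i, j⟩ =>
      rcases Nat.eq_zero_or_pos i.val with h0 | h0
      · have : i = ⟨0, hd0⟩ := Fin.ext h0
        subst this
        exact Finset.mem_image.mpr ⟨j, Finset.mem_univ _, rfl⟩
      · exact absurd (hlegmem i h0 j) hvB
  -- counting
  have hcardV : Fintype.card V = 1 + ∑ i, l i := by
    simp only [V, Fintype.card_option, Fintype.card_sigma, Fintype.card_fin]
    omega
  have hB0large : Fintype.card V - l ⟨0, hd0⟩ ≤ B0.card := by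
    have h5 : (Finset.univ \ B0).card ≤ l ⟨0, hd0⟩ := by
      calc (Finset.univ \ B0).card ≤ _ := Finset.card_le_card hcompl
      _ ≤ (Finset.univ : Finset (Fin (l ⟨0, hd0⟩))).card := Finset.card_image_le
      _ = l ⟨0, hd0⟩ := by simp
    have h6 : (Finset.univ \ B0).card = Fintype.card V - B0.card := by
      rw [Finset.card_sdiff_of_subset (Finset.subset_univ _), Finset.card_univ]
    have h7 : B0.card ≤ Fintype.card V := by
      rw [← Finset.card_univ]; exact Finset.card_le_card (Finset.subset_univ _)
    omega
  -- sum splits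
  have hsplit0 : ∑ i, l i = l ⟨0, hd0⟩ + ∑ j ∈ Finset.univ.filter (fun j => (⟨0, hd0⟩ : Fin d) < j), l j := by
    have : Finset.univ.filter (fun j => (⟨0, hd0⟩ : Fin d) < j) = Finset.univ.erase ⟨0, hd0⟩ := by
      ext j
      simp [Fin.lt_def, Fin.ext_iff]
      omega
    rw [this, Finset.add_sum_erase _ _ (Finset.mem_univ _)]
  have hsplit1 : ∑ j ∈ Finset.univ.filter (fun j => (⟨0, hd0⟩ : Fin d) < j), l j
      = l ⟨1, hd1⟩ + ∑ j ∈ Finset.univ.filter (fun j => (⟨1, hd1⟩ : Fin d) < j), l j := by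
    have h8 : Finset.univ.filter (fun j => (⟨0, hd0⟩ : Fin d) < j)
        = insert ⟨1, hd1⟩ (Finset.univ.filter (fun j => (⟨1, hd1⟩ : Fin d) < j)) := by
      ext j
      simp [Fin.lt_def, Fin.ext_iff]
      omega
    rw [h8, Finset.sum_insert (by simp [Fin.lt_def])]
  -- numeric conclusion
  have hB0small : B0.card ≤ m2 + d' + 2 := (hsize B0 hB0).2
  have hB0big : 1 + 2 * m2 ≤ B0.card := by
    have : 2 * m2 ≤ ∑ j ∈ Finset.univ.filter (fun j => (⟨0, hd0⟩ : Fin d) < j), l j := by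
      rw [hsplit1, hm2]; omega
    omega
  -- q ≥ 3
  have hq3 : 3 ≤ q := by
    rcases hcase with h | ⟨-, h⟩
    · have hn4 : 1 + 4 * m2 ≤ n := by
        have : 2 * m2 ≤ ∑ j ∈ Finset.univ.filter (fun j => (⟨0, hd0⟩ : Fin d) < j), l j := by
          rw [hsplit1, hm2]; omega
        omega
      nlinarith
    · exact h
  have hd'small : 3 * d' ≤ m2 := by
    have : q * d' ≤ m2 := by omega
    nlinarith
  omega
end

section
/- Let i \geq 3 and let S = S(\lambda_1,...,\lambda_d) be an n-vertex spider with \lambda a partition such that i < d, \lambda_i \geq 2, \lambda_i \leq \lambda_{i+1} + ... + \lambda_d, and \lambda_j > \lambda_{j+1} + ... + \lambda_d for all j < i. Write n = q(\lambda_i+1) + r with 0 \leq r < \lambda_i+1 and r = q d' + r' with 0 \leq r' < q. Then S has no connected partition with r' blocks of size \lambda_i + d' + 2 and q - r' blocks of size \lambda_i + d' + 1. -/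
open SimpleGraph

lemma spider_adj_aux {d : ℕ} {l : Fin d → ℕ} {a b : Option (Σ i : Fin d, Fin (l i))}
    (h : (spider d l).Adj a b) :
    a = none ∨ b = none ∨ ∃ (j : Fin d) (s t : Fin (l j)), a = some ⟨j, s⟩ ∧ b = some ⟨j, t⟩ := by
  rw [spider, SimpleGraph.fromRel_adj] at h
  rcases h.2 with (⟨i, hi, rfl, rfl⟩ | ⟨i, j, k, _, rfl, rfl⟩) | (⟨i, hi, rfl, rfl⟩ | ⟨i, j, k, _, rfl, rfl⟩)
  · exact Or.inl rfl
  · exact Or.inr (Or.inr ⟨i, j, k, rfl, rfl⟩)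
  · exact Or.inr (Or.inl rfl)
  · exact Or.inr (Or.inr ⟨i, k, j, rfl, rfl⟩)

lemma spider_walk_leg_s12 {d : ℕ} {l : Fin d → ℕ} {B : Set (Option (Σ i : Fin d, Fin (l i)))}
    (hB : none ∉ B) {x y : ↥B} (w : ((spider d l).induce B).Walk x y)
    (j : Fin d) (hx : ∃ s : Fin (l j), (x : Option (Σ i : Fin d, Fin (l i))) = some ⟨j, s⟩) :
    ∃ t : Fin (l j), (y : Option (Σ i : Fin d, Fin (l i))) = some ⟨j, t⟩ := by
  induction w with
  | nil => exact hx
  | @cons a b c h p ih =>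
    obtain ⟨s, hs⟩ := hx
    have hadj : (spider d l).Adj (a : Option _) (b : Option _) := h
    rcases spider_adj_aux hadj with h1 | h1 | ⟨j', s', t', h1, h2⟩
    · exact absurd (h1 ▸ a.2) hB
    · exact absurd (h1 ▸ b.2) hB
    · rw [hs] at h1
      obtain ⟨rfl, hst⟩ : j' = j ∧ HEq s' s := by
        simpa [Sigma.mk.inj_iff] using h1.symm
      exact ih ⟨t', h2⟩

set_option maxHeartbeats 1000000 in
/-- Let `i ≥ 3` and `S(λ)` be an `n`-vertex spider with `i < d`, `λ_i ≥ 2`,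
`λ_i ≤ λ_{i+1} + ... + λ_d`, and `λ_j > λ_{j+1} + ... + λ_d` for all `j < i`
(indices 1-indexed; 0-indexed in Lean as `⟨i-1, _⟩`). Write `n = q(λ_i+1) + r`,
`0 ≤ r < λ_i+1`, and `r = q d' + r'`, `0 ≤ r' < q`. Then `S(λ)` has no connected partition
with `r'` blocks of size `λ_i + d' + 2` and `q - r'` blocks of size `λ_i + d' + 1`. -/
theorem spider_quotient_missing' (d n i q r d' r' li : ℕ) (hi3 : 3 ≤ i) (hid : i < d)
    (l : Fin d → ℕ)
    (hpos : ∀ j, 0 < l j) (hmono : ∀ j k : Fin d, j ≤ k → l k ≤ l j)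
    (hn : n = 1 + ∑ j, l j)
    (hli : l ⟨i - 1, by omega⟩ = li)
    (h1 : 2 ≤ li)
    (h2 : li ≤ ∑ j ∈ Finset.univ.filter (fun j => (⟨i - 1, by omega⟩ : Fin d) < j), l j)
    (h3 : ∀ j : Fin d, (j : ℕ) < i - 1 →
      ∑ k ∈ Finset.univ.filter (fun k => j < k), l k < l j)
    (hq : n = q * (li + 1) + r) (hr : r < li + 1)
    (hd' : r = q * d' + r') (hr' : r' < q) :
    ¬ HasConnectedPartition (spider d l)
      (Multiset.replicate r' (li + d' + 2) + Multiset.replicate (q - r') (li + d' + 1)) := by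
  rintro ⟨P, hconn, hcard⟩
  have hd1 : i - 1 < d := by omega
  have hd0 : 0 < d := by omega
  have hli' : l ⟨i - 1, hd1⟩ = li := hli
  have h2' : li ≤ ∑ j ∈ Finset.univ.filter (fun j => (⟨i - 1, hd1⟩ : Fin d) < j), l j := h2
  -- lower bound on n
  have hsum0 : ∑ k ∈ Finset.univ.filter (fun k => (⟨0, hd0⟩ : Fin d) < k), l k
      < l ⟨0, hd0⟩ :=
    h3 ⟨0, hd0⟩ (by simp; omega)
  have hfilter : Finset.univ.filter (fun j : Fin d => (i - 1 : ℕ) ≤ (j : ℕ))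
      = insert (⟨i - 1, hd1⟩ : Fin d)
        (Finset.univ.filter (fun j => (⟨i - 1, hd1⟩ : Fin d) < j)) := by
    ext j
    simp [Fin.lt_def, Fin.ext_iff]
    omega
  have hi0notmem : (⟨i - 1, hd1⟩ : Fin d)
      ∉ Finset.univ.filter (fun j => (⟨i - 1, hd1⟩ : Fin d) < j) := by simp
  have hsumge : 2 * li ≤ ∑ j ∈ Finset.univ.filter (fun j : Fin d => (i - 1 : ℕ) ≤ (j : ℕ)), l j := by
    rw [hfilter, Finset.sum_insert hi0notmem, hli']
    omega
  have hsub1 : Finset.univ.filter (fun j : Fin d => (i - 1 : ℕ) ≤ (j : ℕ))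
      ⊆ Finset.univ.filter (fun k => (⟨0, hd0⟩ : Fin d) < k) := by
    intro j hj
    simp only [Finset.mem_filter, Finset.mem_univ, true_and] at hj ⊢
    simp only [Fin.lt_def]
    omega
  have hsumle : ∑ j ∈ Finset.univ.filter (fun j : Fin d => (i - 1 : ℕ) ≤ (j : ℕ)), l j
      ≤ ∑ k ∈ Finset.univ.filter (fun k => (⟨0, hd0⟩ : Fin d) < k), l k :=
    Finset.sum_le_sum_of_subset hsub1
  have hsplit : ∑ j, l j = l ⟨0, hd0⟩
      + ∑ k ∈ Finset.univ.filter (fun k => (⟨0, hd0⟩ : Fin d) < k), l k := by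
    rw [← Finset.sum_filter_add_sum_filter_not Finset.univ
      (fun k => (⟨0, hd0⟩ : Fin d) < k) l]
    have : Finset.univ.filter (fun k : Fin d => ¬ (⟨0, hd0⟩ : Fin d) < k)
        = {(⟨0, hd0⟩ : Fin d)} := by
      ext j
      simp [Fin.lt_def, Fin.ext_iff]
    rw [this, Finset.sum_singleton]
    ring
  have hnge : 4 * li + 2 ≤ n := by omega
  -- q must be at least 3
  have hq3 : 3 ≤ q := by
    by_contra hq3
    have : q * (li + 1) ≤ 2 * (li + 1) := Nat.mul_le_mul_right _ (by omega)
    omega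
  -- sizes of parts
  have hsize : ∀ p ∈ P.parts, li + d' + 1 ≤ p.card ∧ p.card ≤ li + d' + 2 := by
    intro p hp
    have : p.card ∈ Multiset.map Finset.card P.parts.val := Multiset.mem_map_of_mem _ hp
    rw [hcard, Multiset.mem_add] at this
    rcases this with h | h <;> rw [Multiset.eq_of_mem_replicate h] <;> omega
  -- the part containing the centre
  obtain ⟨C, hC, hnoneC⟩ := P.exists_mem (a := (none : Option (Σ j : Fin d, Fin (l j))))
    (Finset.mem_univ _)
  -- every vertex on a long-index leg lies in C
  have hkey : ∀ (j : Fin d) (t : Fin (l j)), (i - 1 : ℕ) ≤ (j : ℕ) → some ⟨j, t⟩ ∈ C := by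
    intro j t hj
    obtain ⟨B, hB, huB⟩ := P.exists_mem (a := (some ⟨j, t⟩ : Option (Σ j : Fin d, Fin (l j))))
      (Finset.mem_univ _)
    by_cases hnB : (none : Option (Σ j : Fin d, Fin (l j))) ∈ B
    · rwa [P.eq_of_mem_parts hB hC hnB hnoneC] at huB
    · exfalso
      have hnB' : (none : Option (Σ j : Fin d, Fin (l j))) ∉ (B : Set _) := by
        simpa using hnB
      have hBsub : B ⊆ Finset.univ.map
          ⟨fun t : Fin (l j) => (some ⟨j, t⟩ : Option (Σ j : Fin d, Fin (l j))),
            fun a b hab => by simpa [Sigma.mk.inj_iff, Fin.ext_iff] using hab⟩ := by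
        intro v hv
        have hreach := ((hconn B hB).preconnected
          ⟨some ⟨j, t⟩, by simpa using huB⟩ ⟨v, by simpa using hv⟩)
        obtain ⟨w⟩ := hreach
        obtain ⟨t', ht'⟩ := spider_walk_leg_s12 hnB' w j ⟨t, rfl⟩
        simp only [Finset.mem_map, Finset.mem_univ, Function.Embedding.coeFn_mk, true_and]
        exact ⟨t', ht'.symm⟩
      have hcardB : B.card ≤ l j := by
        calc B.card ≤ _ := Finset.card_le_card hBsub
        _ = l j := by simp
      have hlj : l j ≤ li := hli' ▸ hmono ⟨i - 1, hd1⟩ j (by rw [Fin.le_def]; exact hj)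
      have := (hsize B hB).1
      omega
  -- C contains the centre plus all legs with index ≥ i - 1
  have hTsub : (insert (none : Option (Σ j : Fin d, Fin (l j)))
      (((Finset.univ.filter (fun j : Fin d => (i - 1 : ℕ) ≤ (j : ℕ))).sigma
        (fun j => (Finset.univ : Finset (Fin (l j))))).map Function.Embedding.some)) ⊆ C := by
    intro v hv
    rcases Finset.mem_insert.1 hv with rfl | hv
    · exact hnoneC
    · obtain ⟨⟨j, t⟩, hjt, rfl⟩ := Finset.mem_map.1 hv
      have hj : (i - 1 : ℕ) ≤ (j : ℕ) := by
        have := (Finset.mem_sigma.1 hjt).1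
        simpa using this
      exact hkey j t hj
  have hTcard : 1 + ∑ j ∈ Finset.univ.filter (fun j : Fin d => (i - 1 : ℕ) ≤ (j : ℕ)), l j
      ≤ C.card := by
    have := Finset.card_le_card hTsub
    rw [Finset.card_insert_of_notMem (by simp), Finset.card_map, Finset.card_sigma] at this
    simp only [Finset.card_univ, Fintype.card_fin] at this
    omega
  have hCle := (hsize C hC).2
  -- final arithmetic
  have hd'ge : li - 1 ≤ d' := by omega
  have hmul : 3 * (li - 1) ≤ q * d' := Nat.mul_le_mul hq3 hd'ge
  have hrle : q * d' ≤ r := by omega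
  omega
end

section
/- Let \lambda be a partition of N with maximum part m satisfying m < \lfloor N/2 \rfloor (so \lambda has at least 3 parts), and let a \geq 0 and 0 \leq i < N be integers with i \geq \max(2m-N+1, 0). If i \geq m, the spider S(i+Na, \lambda) has no connected partition of type (N^{a+1}, i+1); if i < m, the spider S(i+Na, \lambda) has no connected partition of type (N^a, N+i-m, m+1). -/
open SimpleGraph

/-- Let `λ ⊢ N` have maximum part `m` with `m < ⌊N/2⌋`, and let `a ≥ 0` and `0 ≤ i < N` with
`i ≥ max(2m - N + 1, 0)`. If `i ≥ m`, the spider `S(i + Na, λ)` has no connected partition of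
type `(N^(a+1), i+1)`; if `i < m`, the spider `S(i + Na, λ)` has no connected partition of
type `(N^a, N+i-m, m+1)`. -/
theorem spider_family_missing_partition (d N m a i : ℕ) (hd : 1 ≤ d) (l : Fin d → ℕ)
    (hpos : ∀ j, 0 < l j) (hmono : ∀ j k : Fin d, j ≤ k → l k ≤ l j)
    (hN : N = ∑ j, l j)
    (hmax : ∀ j, l j ≤ m) (hmax' : ∃ j, l j = m)
    (hm : m < N / 2) (hi : i < N) (hilo : 2 * m + 1 - N ≤ i) :
    (m ≤ i → ¬ HasConnectedPartition (spider (d + 1) (Fin.cons (i + N * a) l))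
        (Multiset.replicate (a + 1) N + {i + 1})) ∧
    (i < m → ¬ HasConnectedPartition (spider (d + 1) (Fin.cons (i + N * a) l))
        (Multiset.replicate a N + {N + i - m, m + 1})) := by
  have hmN : m < N := by omega
  set L : Fin (d + 1) → ℕ := Fin.cons (i + N * a) l with hLdef
  have key : ∀ μ : Multiset ℕ, (∀ e ∈ μ, m < e ∧ e ≤ N) →
      ¬ HasConnectedPartition (spider (d + 1) L) μ := by
    rintro μ hμ ⟨P, hconn, hcard⟩
    have hpc : ∀ p ∈ P.parts, p.card ∈ μ := by
      intro p hp
      rw [← hcard]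
      exact Multiset.mem_map_of_mem _ hp
    have hadj : ∀ u v : Option (Σ jj : Fin (d+1), Fin (L jj)),
        (spider (d+1) L).Adj u v →
        u = none ∨ v = none ∨ ∃ (jj : Fin (d+1)) (x y : Fin (L jj)),
          u = some ⟨jj, x⟩ ∧ v = some ⟨jj, y⟩ := by
      intro u v huv
      rw [spider, fromRel_adj] at huv
      obtain ⟨-, h | h⟩ := huv
      · rcases h with ⟨jj, h, rfl, rfl⟩ | ⟨jj, x, y, -, rfl, rfl⟩
        · exact Or.inl rfl
        · exact Or.inr (Or.inr ⟨jj, x, y, rfl, rfl⟩)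
      · rcases h with ⟨jj, h, rfl, rfl⟩ | ⟨jj, x, y, -, rfl, rfl⟩
        · exact Or.inr (Or.inl rfl)
        · exact Or.inr (Or.inr ⟨jj, y, x, rfl, rfl⟩)
    have constancy : ∀ (B : Finset (Option (Σ jj : Fin (d+1), Fin (L jj)))),
        (none : Option (Σ jj : Fin (d+1), Fin (L jj))) ∉ B →
        ∀ (u v : (B : Set (Option (Σ jj : Fin (d+1), Fin (L jj))))),
        ((spider (d+1) L).induce (B : Set _)).Walk u v →
        ∀ (jj : Fin (d+1)) (x : Fin (L jj)), u.val = some ⟨jj, x⟩ →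
        ∃ y : Fin (L jj), v.val = some ⟨jj, y⟩ := by
      intro B hnone u v w
      induction w with
      | nil => exact fun jj x hx => ⟨x, hx⟩
      | @cons u' z' v' h p ih =>
        intro jj x hx
        have hz : z'.val ∈ B := z'.2
        have hA : (spider (d+1) L).Adj u'.val z'.val := h
        rcases hadj _ _ hA with h1 | h1 | ⟨jj2, x2, y2, hx2, hy2⟩
        · rw [hx] at h1; simp at h1
        · rw [h1] at hz; exact absurd hz hnone
        · rw [hx] at hx2
          obtain ⟨heq, -⟩ := Sigma.mk.inj_iff.mp (Option.some_injective _ hx2)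
          subst heq
          exact ih jj y2 hy2
    obtain ⟨B0, hB0, hc0⟩ := P.exists_mem (Finset.mem_univ (none : Option (Σ jj : Fin (d+1), Fin (L jj))))
    have claim1 : ∀ (j : Fin d) (k : Fin (l j)),
        (some ⟨j.succ, Fin.cast (by simp [hLdef]) k⟩ : Option (Σ jj : Fin (d+1), Fin (L jj))) ∈ B0 := by
      intro j k
      set v : Option (Σ jj : Fin (d+1), Fin (L jj)) :=
        some ⟨j.succ, Fin.cast (by simp [hLdef]) k⟩ with hv
      obtain ⟨B, hB, hvB⟩ := P.exists_mem (Finset.mem_univ v)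
      have hnone : (none : Option (Σ jj : Fin (d+1), Fin (L jj))) ∈ B := by
        by_contra hn
        have hsub : B ⊆ Finset.univ.image
            (fun y : Fin (L j.succ) => (some ⟨j.succ, y⟩ : Option (Σ jj : Fin (d+1), Fin (L jj)))) := by
          intro w hw
          obtain ⟨wk⟩ := (hconn B hB).preconnected ⟨v, hvB⟩ ⟨w, hw⟩
          obtain ⟨y, hy⟩ := constancy B hn _ _ wk j.succ _ rfl
          simp only [Finset.mem_image, Finset.mem_univ, true_and]
          exact ⟨y, hy.symm⟩
        have hcardB : B.card ≤ L j.succ := by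
          calc B.card ≤ _ := Finset.card_le_card hsub
          _ ≤ (Finset.univ : Finset (Fin (L j.succ))).card := Finset.card_image_le
          _ = L j.succ := by simp
        have hLj : L j.succ = l j := by simp [hLdef]
        have := (hμ _ (hpc B hB)).1
        have := hmax j
        omega
      have hBB0 : B = B0 := by
        by_contra hne
        exact Finset.disjoint_left.mp (P.disjoint hB hB0 hne) hnone hc0
      rw [← hBB0]; exact hvB
    -- now lower bound card of B0
    have hgeb : N + 1 ≤ B0.card := by
      classical
      let g : Option (Σ j : Fin d, Fin (l j)) → Option (Σ jj : Fin (d+1), Fin (L jj)) :=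
        Option.map (fun p => ⟨p.1.succ, Fin.cast (by simp [hLdef]) p.2⟩)
      have hmaps : ∀ x ∈ (Finset.univ : Finset (Option (Σ j : Fin d, Fin (l j)))), g x ∈ B0 := by
        rintro (_ | ⟨j, k⟩) -
        · exact hc0
        · exact claim1 j k
      have hginj : Set.InjOn g (Finset.univ : Finset (Option (Σ j : Fin d, Fin (l j)))) := by
        rintro x - y - hxy
        apply Option.map_injective _ hxy
        rintro ⟨j1, k1⟩ ⟨j2, k2⟩ h
        obtain ⟨h1, h2⟩ := Sigma.mk.inj_iff.mp h
        have hj : j1 = j2 := Fin.succ_injective _ h1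
        subst hj
        congr 1
        have := eq_of_heq h2
        exact Fin.cast_injective _ this
      have := Finset.card_le_card_of_injOn g hmaps hginj
      have hcu : (Finset.univ : Finset (Option (Σ j : Fin d, Fin (l j)))).card = 1 + ∑ j, l j := by
        simp [Fintype.card_option, Fintype.card_sigma, add_comm]
      omega
    have := (hμ _ (hpc B0 hB0)).2
    omega
  constructor
  · intro him
    apply key
    intro e he
    simp only [Multiset.mem_add, Multiset.mem_replicate, Multiset.mem_singleton] at he
    rcases he with ⟨-, rfl⟩ | rfl <;> omega
  · intro him
    apply key
    intro e he
    simp only [Multiset.mem_add, Multiset.mem_replicate, Multiset.insert_eq_cons,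
      Multiset.mem_cons, Multiset.mem_singleton] at he
    rcases he with ⟨-, rfl⟩ | rfl | rfl <;> omega
end
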